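/- arXiv:1902.04952 — 4 statements merged into one kernel-verified Lean document; each statement's English description precedes it below -/
import Mathlib

section
/- Let H be a d×d symmetric positive definite real matrix with condition number κ = σ_max(H)/σ_min(H), let w* ∈ ℝ^d, and let ε ∈ (0, 1/4). Consider the quadratic objective with constant Hessian H and minimizer w*, so that the gradient at any point w is g(w) = H(w − w*). Suppose for each iteration t a symmetric positive definite matrix H̃_t satisfies (1−ε)H ⪯ H̃_t ⪯ (1+ε)H, and the iterates are updated by w_{t+1} = w_t − H̃_t⁻¹ g(w_t). Then for every t ≥ 0, ‖w_t − w*‖₂ ≤ (√2·ε)^t · √κ · ‖w_0 − w*‖₂. -/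
open Matrix

noncomputable section

/-- The Euclidean (ℓ2) norm of a vector in `ℝ^d`. -/
def norm2 {d : ℕ} (x : Fin d → ℝ) : ℝ := Real.sqrt (x ⬝ᵥ x)

/-- The smallest eigenvalue of a Hermitian matrix. -/
def sMin {d : ℕ} {H : Matrix (Fin d) (Fin d) ℝ} (hH : H.IsHermitian) : ℝ :=
  ⨅ i, hH.eigenvalues i

/-- The largest eigenvalue of a Hermitian matrix. -/
def sMax {d : ℕ} {H : Matrix (Fin d) (Fin d) ℝ} (hH : H.IsHermitian) : ℝ :=
  ⨆ i, hH.eigenvalues i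


/-
In the energy norm `‖e‖_H² = eᵀ H e` one subsampled Newton step maps the error `e` to
`r = e - H̃⁻¹ H e`, which satisfies `H̃ r = (H̃ - H) e`. The spectral approximation says
`-ε H ⪯ H̃ - H ⪯ ε H`, which by polarization bounds the form `xᵀ (H̃ - H) y` by
`ε/2 (‖x‖_H² + ‖y‖_H²)`; weighing `x = (1 - ε) r` against `y = ε e` gives
`‖r‖_H ≤ ε/(1 - ε) ‖e‖_H ≤ √2 ε ‖e‖_H`. Passing between the energy norm and the Euclidean
norm through the extreme eigenvalues of `H` costs the factor `√κ`.
-/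

namespace Matrix

variable {n : Type*} [Fintype n]

lemma PosSemidef.dotProduct_mulVec_nonneg_real {A : Matrix n n ℝ} (hA : A.PosSemidef)
    (x : n → ℝ) : 0 ≤ x ⬝ᵥ (A *ᵥ x) := by
  simpa using hA.dotProduct_mulVec_nonneg x

lemma IsHermitian.dotProduct_mulVec_comm {A : Matrix n n ℝ} (hA : A.IsHermitian) (x y : n → ℝ) :
    y ⬝ᵥ (A *ᵥ x) = x ⬝ᵥ (A *ᵥ y) := by
  rw [dotProduct_mulVec, ← mulVec_transpose, dotProduct_comm,
    ← conjTranspose_eq_transpose_of_trivial, hA.eq]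

lemma two_mul_dotProduct_mulVec_le {A E : Matrix n n ℝ} (hE : E.IsHermitian) {ε : ℝ}
    (h₁ : (E + ε • A).PosSemidef) (h₂ : (ε • A - E).PosSemidef) (x y : n → ℝ) :
    2 * (x ⬝ᵥ (E *ᵥ y)) ≤ ε * (x ⬝ᵥ (A *ᵥ x) + y ⬝ᵥ (A *ᵥ y)) := by
  have hsum := h₂.dotProduct_mulVec_nonneg_real (x + y)
  have hdiff := h₁.dotProduct_mulVec_nonneg_real (x - y)
  have hsymm := hE.dotProduct_mulVec_comm x y
  simp only [add_mulVec, sub_mulVec, smul_mulVec, mulVec_add, mulVec_sub, dotProduct_add,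
    dotProduct_sub, add_dotProduct, sub_dotProduct, dotProduct_smul, smul_eq_mul] at hsum hdiff
  linarith

variable [DecidableEq n]

open scoped MatrixOrder in
lemma IsHermitian.dotProduct_mulVec_le {H : Matrix n n ℝ} (hH : H.IsHermitian) {r : ℝ}
    (hr : ∀ i, hH.eigenvalues i ≤ r) (x : n → ℝ) :
    x ⬝ᵥ (H *ᵥ x) ≤ r * (x ⬝ᵥ x) := by
  have hle : H ≤ algebraMap ℝ _ r := by
    rw [le_algebraMap_iff_spectrum_le hH.isSelfAdjoint, hH.spectrum_real_eq_range_eigenvalues]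
    rintro _ ⟨i, rfl⟩
    exact hr i
  have := (le_iff.mp hle).dotProduct_mulVec_nonneg_real x
  simp only [Algebra.algebraMap_eq_smul_one, sub_mulVec, smul_mulVec, one_mulVec,
    dotProduct_sub, dotProduct_smul, smul_eq_mul] at this
  linarith

open scoped MatrixOrder in
lemma IsHermitian.le_dotProduct_mulVec {H : Matrix n n ℝ} (hH : H.IsHermitian) {r : ℝ}
    (hr : ∀ i, r ≤ hH.eigenvalues i) (x : n → ℝ) :
    r * (x ⬝ᵥ x) ≤ x ⬝ᵥ (H *ᵥ x) := by
  have hle : algebraMap ℝ _ r ≤ H := by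
    rw [algebraMap_le_iff_le_spectrum hH.isSelfAdjoint, hH.spectrum_real_eq_range_eigenvalues]
    rintro _ ⟨i, rfl⟩
    exact hr i
  have := (le_iff.mp hle).dotProduct_mulVec_nonneg_real x
  simp only [Algebra.algebraMap_eq_smul_one, sub_mulVec, smul_mulVec, one_mulVec,
    dotProduct_sub, dotProduct_smul, smul_eq_mul] at this
  linarith

lemma newton_step_energy_le {H Ht : Matrix n n ℝ} (hH : H.IsHermitian) (hHt : Ht.PosDef)
    {ε : ℝ} (hε₀ : 0 < ε) (hε₁ : ε < 1)
    (h₁ : (Ht - (1 - ε) • H).PosSemidef) (h₂ : ((1 + ε) • H - Ht).PosSemidef) (e : n → ℝ) :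
    (1 - ε) ^ 2 * ((e - Ht⁻¹ *ᵥ (H *ᵥ e)) ⬝ᵥ (H *ᵥ (e - Ht⁻¹ *ᵥ (H *ᵥ e)))) ≤
      ε ^ 2 * (e ⬝ᵥ (H *ᵥ e)) := by
  set r := e - Ht⁻¹ *ᵥ (H *ᵥ e)
  set E := Ht - H
  have hE : E.IsHermitian := hHt.isHermitian.sub hH
  have hlow : (E + ε • H).PosSemidef := by convert h₁ using 1; module
  have hup : (ε • H - E).PosSemidef := by convert h₂ using 1; module
  have hHr : H *ᵥ r = E *ᵥ e - E *ᵥ r := by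
    have : Ht *ᵥ (Ht⁻¹ *ᵥ (H *ᵥ e)) = H *ᵥ e := by
      rw [mulVec_mulVec, mul_nonsing_inv _ ((isUnit_iff_isUnit_det _).mp hHt.isUnit), one_mulVec]
    simp only [r, E, mulVec_sub, sub_mulVec, this]
    abel
  have hR : r ⬝ᵥ (H *ᵥ r) = r ⬝ᵥ (E *ᵥ e) - r ⬝ᵥ (E *ᵥ r) := by rw [hHr, dotProduct_sub]
  have hrEr := hlow.dotProduct_mulVec_nonneg_real r
  have hcross := two_mul_dotProduct_mulVec_le hE hlow hup ((1 - ε) • r) (ε • e)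
  simp only [add_mulVec, smul_mulVec, mulVec_smul, dotProduct_add, dotProduct_smul,
    smul_dotProduct, smul_eq_mul] at hrEr hcross
  have hfirst : (1 - ε) * (r ⬝ᵥ (H *ᵥ r)) ≤ r ⬝ᵥ (E *ᵥ e) := by linarith
  have hsecond : 2 * (1 - ε) * (r ⬝ᵥ (E *ᵥ e)) ≤
      (1 - ε) ^ 2 * (r ⬝ᵥ (H *ᵥ r)) + ε ^ 2 * (e ⬝ᵥ (H *ᵥ e)) := by
    refine le_of_mul_le_mul_left ?_ hε₀
    linarith
  linarith [mul_le_mul_of_nonneg_left hfirst (by linarith : (0 : ℝ) ≤ 2 * (1 - ε))]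

end Matrix

section

variable {d : ℕ} {H : Matrix (Fin d) (Fin d) ℝ}

lemma sMin_le_eigenvalues (hH : H.IsHermitian) (i : Fin d) : sMin hH ≤ hH.eigenvalues i :=
  ciInf_le (Finite.bddBelow_range _) i

lemma eigenvalues_le_sMax (hH : H.IsHermitian) (i : Fin d) : hH.eigenvalues i ≤ sMax hH :=
  le_ciSup (Finite.bddAbove_range _) i

lemma sMin_pos [Nonempty (Fin d)] (hH : H.PosDef) : 0 < sMin hH.1 := by
  obtain ⟨i, hi⟩ := exists_eq_ciInf_of_finite (f := hH.1.eigenvalues)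
  rw [sMin, ← hi]
  exact hH.eigenvalues_pos i

lemma norm2_le_of_energy_le (hH : H.PosDef) {x y : Fin d → ℝ} {c : ℝ} (hc : 0 ≤ c)
    (h : x ⬝ᵥ (H *ᵥ x) ≤ c ^ 2 * (y ⬝ᵥ (H *ᵥ y))) :
    norm2 x ≤ c * Real.sqrt (sMax hH.1 / sMin hH.1) * norm2 y := by
  rcases isEmpty_or_nonempty (Fin d) with hd | hd
  · simp [norm2, dotProduct]
  have hm := sMin_pos hH
  have hlow := hH.1.le_dotProduct_mulVec (sMin_le_eigenvalues hH.1) x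
  have hup := hH.1.dotProduct_mulVec_le (eigenvalues_le_sMax hH.1) y
  have hsq : x ⬝ᵥ x ≤ c ^ 2 * (sMax hH.1 / sMin hH.1) * (y ⬝ᵥ y) := by
    rw [mul_div_assoc', div_mul_eq_mul_div, le_div_iff₀ hm]
    linarith [mul_le_mul_of_nonneg_left hup (sq_nonneg c)]
  calc norm2 x ≤ Real.sqrt (c ^ 2 * (sMax hH.1 / sMin hH.1) * (y ⬝ᵥ y)) := Real.sqrt_le_sqrt hsq
    _ = c * Real.sqrt (sMax hH.1 / sMin hH.1) * norm2 y := by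
      rw [Real.sqrt_mul' _ (by simpa using dotProduct_star_self_nonneg y),
        Real.sqrt_mul (sq_nonneg c), Real.sqrt_sq hc, norm2]

end

/-- global convergence of subsampled Newton for a quadratic objective with
constant Hessian `H` and minimizer `wstar`. -/
theorem ssn_global_convergence_quadratic {d : ℕ}
    (H : Matrix (Fin d) (Fin d) ℝ) (hH : H.PosDef)
    (wstar : Fin d → ℝ) (ε : ℝ) (hε : 0 < ε ∧ ε < 1 / 4)
    (Htil : ℕ → Matrix (Fin d) (Fin d) ℝ)
    (hHtilPD : ∀ t, (Htil t).PosDef)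
    (happrox : ∀ t, (Htil t - (1 - ε) • H).PosSemidef ∧ ((1 + ε) • H - Htil t).PosSemidef)
    (w : ℕ → Fin d → ℝ)
    (hupdate : ∀ t, w (t + 1) = w t - (Htil t)⁻¹ *ᵥ (H *ᵥ (w t - wstar))) :
    ∀ t, norm2 (w t - wstar) ≤
      (Real.sqrt 2 * ε) ^ t * Real.sqrt (sMax hH.1 / sMin hH.1) * norm2 (w 0 - wstar) := by
  obtain ⟨hε₀, hε₁⟩ := hε
  set Q : ℕ → ℝ := fun t => (w t - wstar) ⬝ᵥ (H *ᵥ (w t - wstar))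
  have hstep : ∀ t, Q (t + 1) ≤ 2 * ε ^ 2 * Q t := by
    intro t
    have hnext : w (t + 1) - wstar = (w t - wstar) - (Htil t)⁻¹ *ᵥ (H *ᵥ (w t - wstar)) := by
      rw [hupdate]; abel
    have hcontr := newton_step_energy_le hH.1 (hHtilPD t) hε₀ (by linarith) (happrox t).1
      (happrox t).2 (w t - wstar)
    have hQ := hH.posSemidef.dotProduct_mulVec_nonneg_real (w (t + 1) - wstar)
    simp only [Q, hnext] at hQ ⊢
    have hfactor : 1 ≤ 2 * (1 - ε) ^ 2 := by nlinarith
    linarith [mul_le_mul_of_nonneg_right hfactor hQ]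
  intro t
  refine norm2_le_of_energy_le hH (by positivity) ?_
  have hrate : ((Real.sqrt 2 * ε) ^ t) ^ 2 = (2 * ε ^ 2) ^ t := by
    rw [← pow_mul, mul_comm t 2, pow_mul, mul_pow, Real.sq_sqrt zero_le_two]
  rw [hrate]
  exact le_geom (by positivity) t fun k _ => hstep k
end
end

section
/- Let H and H̃ be d×d symmetric positive definite real matrices with (1−ε)H ⪯ H̃ ⪯ (1+ε)H for some ε ∈ (0, 1), and let g ∈ ℝ^d. Define the quadratic auxiliary function φ(p) = pᵀHp − 2pᵀg, and let p* = H⁻¹g (its minimizer) and p̃ = H̃⁻¹g. Then min_p φ(p) ≤ φ(p̃) ≤ (1 − α²)·min_p φ(p), where α = ε/(1−ε). -/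
/-!
Completing the square gives `φ p = (p - p*)ᵀ H (p - p*) - gᵀ H⁻¹ g`, so everything reduces to
`(p̃ - p*)ᵀ H (p̃ - p*) ≤ α² gᵀ H⁻¹ g`. Since `p̃ - p* = H⁻¹ (H - H̃) p̃` and `g = H̃ p̃`, this is the
quadratic form at `p̃` of the Loewner inequality `(H - H̃) H⁻¹ (H - H̃) ⪯ α² H̃ H⁻¹ H̃`.
Conjugating by `H^{-1/2}` turns it into `(1 - A)² ⪯ α² A²` for `A = H^{-1/2} H̃ H^{-1/2}`, whose
spectrum lies in `[1 - ε, 1 + ε]`, where `|1 - λ| ≤ ε = α (1 - ε) ≤ α λ`.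
-/

open Matrix
open scoped MatrixOrder ComplexOrder

section
variable {A : Type*} [Ring A] [PartialOrder A] [StarRing A] [StarOrderedRing A]
  [TopologicalSpace A] [Algebra ℝ A] [StarModule ℝ A]
  [ContinuousFunctionalCalculus ℝ A IsSelfAdjoint] [NonnegSpectrumClass ℝ A]

theorem one_sub_sq_le_smul_sq {a : A} {ε : ℝ} (hε₀ : 0 ≤ ε) (hε₁ : ε < 1)
    (ha₁ : algebraMap ℝ A (1 - ε) ≤ a) (ha₂ : a ≤ algebraMap ℝ A (1 + ε)) :
    (1 - a) ^ 2 ≤ (ε / (1 - ε)) ^ 2 • a ^ 2 := by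
  set α := ε / (1 - ε) with hα
  set b := a - algebraMap ℝ A (1 - ε)
  set c := algebraMap ℝ A (1 + ε) - a
  have hb : 0 ≤ b := sub_nonneg.mpr ha₁
  have hc : 0 ≤ c := sub_nonneg.mpr ha₂
  have hbc : 0 ≤ b * c := Commute.mul_nonneg hb hc <|
    (Algebra.commute_algebraMap_right _ b).sub_right
      ((Commute.refl a).sub_left (Algebra.commute_algebraMap_left _ a))
  have hbb : 0 ≤ b * b := (IsSelfAdjoint.of_nonneg hb).mul_self_nonneg
  have hα₀ : 0 ≤ α := div_nonneg hε₀ (by linarith)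
  have key : α ^ 2 • a ^ 2 - (1 - a) ^ 2 = (1 + α) • (b * c + α • (b * b)) := by
    simp only [b, c, Algebra.algebraMap_eq_smul_one, sq, sub_mul, mul_sub, add_mul, mul_add,
      smul_mul_assoc, mul_smul_comm, one_mul, mul_one, smul_sub, smul_add, smul_smul]
    have : 1 - ε ≠ 0 := by linarith
    match_scalars <;> (rw [hα]; field_simp; ring)
  rw [← sub_nonneg, key]
  exact smul_nonneg (by positivity) (add_nonneg hbc (smul_nonneg hα₀ hbb))

end

namespace Matrix
variable {n : Type*} [Fintype n]

lemma IsSymm.mulVec_dotProduct {M : Matrix n n ℝ} (hM : M.IsSymm) (x y : n → ℝ) :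
    M *ᵥ x ⬝ᵥ y = x ⬝ᵥ M *ᵥ y := by
  rw [dotProduct_mulVec, ← vecMul_transpose, hM.eq]

lemma IsSymm.complete_square {H : Matrix n n ℝ} (hH : H.IsSymm) {q g : n → ℝ}
    (hq : H *ᵥ q = g) (p : n → ℝ) :
    p ⬝ᵥ H *ᵥ p - 2 * (p ⬝ᵥ g) = (p - q) ⬝ᵥ H *ᵥ (p - q) - q ⬝ᵥ g := by
  have hqp : q ⬝ᵥ H *ᵥ p = p ⬝ᵥ g := by rw [← hH.mulVec_dotProduct, hq, dotProduct_comm]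
  simp only [mulVec_sub, dotProduct_sub, sub_dotProduct, hq, hqp]
  ring

lemma dotProduct_mulVec_le_of_le {M N : Matrix n n ℝ} (h : M ≤ N) (x : n → ℝ) :
    x ⬝ᵥ M *ᵥ x ≤ x ⬝ᵥ N *ᵥ x := by
  simpa [sub_mulVec, dotProduct_sub] using (le_iff.mp h).dotProduct_mulVec_nonneg x

variable [DecidableEq n]

lemma mul_conj_nonsing_inv_sq_mul {𝕜 : Type*} [CommRing 𝕜] {S : Matrix n n 𝕜}
    (hS : IsUnit S.det) (X : Matrix n n 𝕜) :
    S * (S⁻¹ * X * S⁻¹) ^ 2 * S = X * (S * S)⁻¹ * X := by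
  simp only [sq, mul_inv_rev, mul_assoc, mul_nonsing_inv_cancel_left _ _ hS,
    nonsing_inv_mul _ hS, mul_one]

theorem sub_mul_inv_mul_sub_le {𝕜 : Type*} [RCLike 𝕜] {H H' : Matrix n n 𝕜} (hH : H.PosDef)
    {ε : ℝ} (hε₀ : 0 ≤ ε) (hε₁ : ε < 1) (h₁ : (1 - ε) • H ≤ H') (h₂ : H' ≤ (1 + ε) • H) :
    (H - H') * H⁻¹ * (H - H') ≤ (ε / (1 - ε)) ^ 2 • (H' * H⁻¹ * H') := by
  set S := CFC.sqrt H
  have hSS : S * S = H := CFC.sqrt_mul_sqrt_self H hH.posSemidef.nonneg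
  have hS : IsUnit S.det := by
    rw [← isUnit_iff_isUnit_det, CFC.isUnit_sqrt_iff _ hH.posSemidef.nonneg]
    exact hH.isUnit
  have hSsa : IsSelfAdjoint S := IsSelfAdjoint.of_nonneg (CFC.sqrt_nonneg H)
  have hSinvsa : IsSelfAdjoint S⁻¹ := by
    rw [IsSelfAdjoint, star_eq_conjTranspose, conjTranspose_nonsing_inv, ← star_eq_conjTranspose,
      hSsa.star_eq]
  have hwhite (c : ℝ) : S⁻¹ * (c • H) * S⁻¹ = algebraMap ℝ _ c := by
    rw [← hSS, Algebra.algebraMap_eq_smul_one, mul_smul_comm, smul_mul_assoc, ← mul_assoc S⁻¹,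
      nonsing_inv_mul _ hS, one_mul, mul_nonsing_inv _ hS]
  have hone_sub : 1 - S⁻¹ * H' * S⁻¹ = S⁻¹ * (H - H') * S⁻¹ := by
    rw [mul_sub, sub_mul, ← one_smul ℝ H, hwhite, map_one]
  have hwhitened := one_sub_sq_le_smul_sq hε₀ hε₁ (a := S⁻¹ * H' * S⁻¹)
    (hwhite _ ▸ hSinvsa.conjugate_le_conjugate h₁) (hwhite _ ▸ hSinvsa.conjugate_le_conjugate h₂)
  have := hSsa.conjugate_le_conjugate hwhitened
  rwa [hone_sub, mul_smul_comm, smul_mul_assoc, mul_conj_nonsing_inv_sq_mul hS,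
    mul_conj_nonsing_inv_sq_mul hS, hSS] at this

lemma mulVec_nonsing_inv_mulVec {H : Matrix n n ℝ} (hH : IsUnit H.det) (g : n → ℝ) :
    H *ᵥ (H⁻¹ *ᵥ g) = g := by
  rw [mulVec_mulVec, mul_nonsing_inv _ hH, one_mulVec]

lemma sub_nonsing_inv_mulVec_dotProduct {H H' : Matrix n n ℝ} (hH : IsUnit H.det)
    (hHs : H.IsSymm) (hH's : H'.IsSymm) {x g : n → ℝ} (hx : H' *ᵥ x = g) :
    (x - H⁻¹ *ᵥ g) ⬝ᵥ H *ᵥ (x - H⁻¹ *ᵥ g) = x ⬝ᵥ ((H - H') * H⁻¹ * (H - H')) *ᵥ x := by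
  have hinv : (H⁻¹).IsSymm := by rw [IsSymm, transpose_nonsing_inv, hHs.eq]
  have hdiff : x - H⁻¹ *ᵥ g = H⁻¹ *ᵥ ((H - H') *ᵥ x) := by
    rw [sub_mulVec, mulVec_sub, hx, mulVec_mulVec, nonsing_inv_mul _ hH, one_mulVec]
  rw [hdiff, mulVec_nonsing_inv_mulVec hH, hinv.mulVec_dotProduct, dotProduct_comm,
    ← (hHs.sub hH's).mulVec_dotProduct, dotProduct_comm, mulVec_mulVec, mulVec_mulVec]

lemma nonsing_inv_mulVec_dotProduct {H H' : Matrix n n ℝ} (hH's : H'.IsSymm) {x g : n → ℝ}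
    (hx : H' *ᵥ x = g) : H⁻¹ *ᵥ g ⬝ᵥ g = x ⬝ᵥ (H' * H⁻¹ * H') *ᵥ x := by
  rw [← hx, dotProduct_comm, hH's.mulVec_dotProduct, mulVec_mulVec, mulVec_mulVec]

end Matrix

/-- the Approximate Newton Direction lemma. If `H̃` is an `ε`-spectral
approximation of `H`, then the approximate Newton direction `p̃ = H̃⁻¹g` nearly minimizes the
quadratic auxiliary function `φ(p) = pᵀHp − 2pᵀg`, whose minimizer is `p* = H⁻¹g`. -/
theorem approximate_newton_direction {d : ℕ}
    (H Htil : Matrix (Fin d) (Fin d) ℝ) (hH : H.PosDef) (hHtil : Htil.PosDef)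
    (ε : ℝ) (hε : 0 < ε ∧ ε < 1)
    (happrox : (Htil - (1 - ε) • H).PosSemidef ∧ ((1 + ε) • H - Htil).PosSemidef)
    (g : Fin d → ℝ) :
    let φ : (Fin d → ℝ) → ℝ := fun p => p ⬝ᵥ (H *ᵥ p) - 2 * (p ⬝ᵥ g)
    let pstar : Fin d → ℝ := H⁻¹ *ᵥ g
    let ptil : Fin d → ℝ := Htil⁻¹ *ᵥ g
    let α : ℝ := ε / (1 - ε)
    (∀ p, φ pstar ≤ φ p) ∧ φ pstar ≤ φ ptil ∧ φ ptil ≤ (1 - α ^ 2) * φ pstar := by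
  intro φ pstar ptil α
  have hHs : H.IsSymm := isHermitian_iff_isSymm.mp hH.isHermitian
  have hHtils : Htil.IsSymm := isHermitian_iff_isSymm.mp hHtil.isHermitian
  have hdet : IsUnit H.det := hH.det_pos.ne'.isUnit
  have hφ : ∀ p, φ p = (p - pstar) ⬝ᵥ H *ᵥ (p - pstar) - pstar ⬝ᵥ g :=
    hHs.complete_square (mulVec_nonsing_inv_mulVec hdet g)
  have hφstar : φ pstar = -(pstar ⬝ᵥ g) := by simpa using hφ pstar
  have hmin (p : Fin d → ℝ) : φ pstar ≤ φ p := by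
    have := hH.posSemidef.dotProduct_mulVec_nonneg (p - pstar)
    rw [star_trivial] at this
    linarith [hφ p]
  have hptil : Htil *ᵥ ptil = g := mulVec_nonsing_inv_mulVec hHtil.det_pos.ne'.isUnit g
  have herr : (ptil - pstar) ⬝ᵥ H *ᵥ (ptil - pstar) ≤ α ^ 2 * (pstar ⬝ᵥ g) := by
    rw [sub_nonsing_inv_mulVec_dotProduct hdet hHs hHtils hptil,
      nonsing_inv_mulVec_dotProduct hHtils hptil, ← smul_eq_mul (α ^ 2), ← dotProduct_smul,
      ← smul_mulVec]
    exact dotProduct_mulVec_le_of_le (sub_mul_inv_mul_sub_le hH hε.1.le hε.2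
      (le_iff.mpr happrox.1) (le_iff.mpr happrox.2)) ptil
  refine ⟨hmin, hmin ptil, ?_⟩
  rw [hφ ptil, hφstar]
  linarith
end

section
/- Let H and H̃ be d×d symmetric positive definite real matrices with (1−ε)H ⪯ H̃ ⪯ (1+ε)H for some ε ∈ (0, 1), and let g ∈ ℝ^d. Let p* = H⁻¹g and p̃ = H̃⁻¹g, and let H^{1/2} denote the positive semidefinite square root of H. Then ‖H^{1/2}(p̃ − p*)‖₂ ≤ (ε/(1−ε))·‖H^{1/2}p*‖₂. -/
/-!
With `p = H⁻¹g` and `Δ = H̃⁻¹g - p` one has `H̃Δ = (H - H̃)p`, hence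
`(1 - ε)‖Δ‖_H² ≤ ΔᵀH̃Δ = Δᵀ(H - H̃)p`. Since `-εH ⪯ H - H̃ ⪯ εH`, Cauchy–Schwarz for the
positive semidefinite forms `εH ± (H - H̃)` bounds the right side by `ε‖Δ‖_H‖p‖_H`, and dividing
by `‖Δ‖_H` gives the claim, because `‖H^{1/2}v‖₂ = ‖v‖_H`.
-/

open Matrix

noncomputable section

def Matrix.PosSemidef.sqrt {n : Type*} [Fintype n] [DecidableEq n]
    {A : Matrix n n ℝ} (hA : A.PosSemidef) : Matrix n n ℝ :=
  (hA.1.eigenvectorUnitary : Matrix n n ℝ) * diagonal ((√·) ∘ hA.1.eigenvalues) *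
    (star hA.1.eigenvectorUnitary : Matrix n n ℝ)

open scoped MatrixOrder

namespace Matrix

variable {n : Type*} [Fintype n]

theorem PosSemidef.abs_dotProduct_mulVec_le {B : Matrix n n ℝ} (hB : B.PosSemidef) (x y : n → ℝ) :
    |x ⬝ᵥ (B *ᵥ y)| ≤ √(x ⬝ᵥ (B *ᵥ x)) * √(y ⬝ᵥ (B *ᵥ y)) := by
  let _ := B.toSeminormedAddCommGroup hB
  let _ := B.toInnerProductSpace hB
  have hinner (u v : n → ℝ) : inner ℝ u v = u ⬝ᵥ (B *ᵥ v) := dotProduct_comm _ _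
  simpa only [norm_eq_sqrt_re_inner (𝕜 := ℝ), hinner, RCLike.re_to_real] using
    abs_real_inner_le_norm x y

theorem dotProduct_mulVec_le_of_neg_smul_le_of_le_smul {A N : Matrix n n ℝ} {c : ℝ} (hc : 0 ≤ c)
    (hlo : -(c • A) ≤ N) (hhi : N ≤ c • A) (x y : n → ℝ) :
    x ⬝ᵥ (N *ᵥ y) ≤ c * √(x ⬝ᵥ (A *ᵥ x)) * √(y ⬝ᵥ (A *ᵥ y)) := by
  set P := N + c • A
  set Q := c • A - N
  have hP : P.PosSemidef := by simpa only [le_iff, sub_neg_eq_add] using hlo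
  have hQ : Q.PosSemidef := le_iff.mp hhi
  have hsplit : 2 * (x ⬝ᵥ (N *ᵥ y)) = x ⬝ᵥ (P *ᵥ y) - x ⬝ᵥ (Q *ᵥ y) := by
    simp only [P, Q, add_mulVec, sub_mulVec, dotProduct_add, dotProduct_sub]
    ring
  have hform (z : n → ℝ) : z ⬝ᵥ (P *ᵥ z) + z ⬝ᵥ (Q *ᵥ z) = (2 * c) * (z ⬝ᵥ (A *ᵥ z)) := by
    simp only [P, Q, add_mulVec, sub_mulVec, smul_mulVec, dotProduct_add, dotProduct_sub,
      dotProduct_smul, smul_eq_mul]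
    ring
  have hnonneg {M : Matrix n n ℝ} (hM : M.PosSemidef) (z : n → ℝ) : 0 ≤ z ⬝ᵥ (M *ᵥ z) := by
    simpa using hM.dotProduct_mulVec_nonneg z
  -- Cauchy–Schwarz in `ℝ²` for the two pairs of square roots
  have hCS := Real.sum_sqrt_mul_sqrt_le Finset.univ
    (f := ![x ⬝ᵥ (P *ᵥ x), x ⬝ᵥ (Q *ᵥ x)]) (g := ![y ⬝ᵥ (P *ᵥ y), y ⬝ᵥ (Q *ᵥ y)])
    (fun i => by fin_cases i <;> simp [hnonneg hP, hnonneg hQ])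
    (fun i => by fin_cases i <;> simp [hnonneg hP, hnonneg hQ])
  have h2c : 0 ≤ 2 * c := by positivity
  simp only [Fin.sum_univ_two, cons_val_zero, cons_val_one, hform,
    Real.sqrt_mul h2c] at hCS
  have hPxy := (le_abs_self _).trans (hP.abs_dotProduct_mulVec_le x y)
  have hQxy := (neg_le_abs _).trans (hQ.abs_dotProduct_mulVec_le x y)
  have hrhs : √(2 * c) * √(x ⬝ᵥ (A *ᵥ x)) * (√(2 * c) * √(y ⬝ᵥ (A *ᵥ y)))
      = 2 * (c * √(x ⬝ᵥ (A *ᵥ x)) * √(y ⬝ᵥ (A *ᵥ y))) := by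
    rw [mul_mul_mul_comm, Real.mul_self_sqrt h2c]
    ring
  linarith

variable [DecidableEq n]

theorem mulVec_inv_mulVec_sub_inv_mulVec {R : Type*} [CommRing R]
    {A B : Matrix n n R} (hA : IsUnit A) (hB : IsUnit B) (g : n → R) :
    B *ᵥ (B⁻¹ *ᵥ g - A⁻¹ *ᵥ g) = (A - B) *ᵥ (A⁻¹ *ᵥ g) := by
  have cancel {M : Matrix n n R} (hM : IsUnit M) : M *ᵥ (M⁻¹ *ᵥ g) = g := by
    rw [mulVec_mulVec, mul_nonsing_inv _ ((isUnit_iff_isUnit_det M).mp hM), one_mulVec]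
  rw [mulVec_sub, cancel hB, sub_mulVec, cancel hA]

namespace PosSemidef

variable {A : Matrix n n ℝ}

theorem sqrt_eq_CFC_sqrt (hA : A.PosSemidef) : hA.sqrt = CFC.sqrt A := by
  rw [CFC.sqrt_eq_real_sqrt A hA.nonneg, cfcₙ_eq_cfc, hA.1.cfc_eq, IsHermitian.cfc,
    Unitary.conjStarAlgAut_apply]
  rfl

theorem sqrt_mul_sqrt (hA : A.PosSemidef) : hA.sqrt * hA.sqrt = A := by
  rw [sqrt_eq_CFC_sqrt, CFC.sqrt_mul_sqrt_self A hA.nonneg]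

theorem transpose_sqrt (hA : A.PosSemidef) : hA.sqrtᵀ = hA.sqrt := by
  rw [← conjTranspose_eq_transpose_of_trivial, sqrt_eq_CFC_sqrt]
  exact (CFC.sqrt_nonneg A).posSemidef.isHermitian

theorem norm2_sqrt_mulVec {d : ℕ} {A : Matrix (Fin d) (Fin d) ℝ} (hA : A.PosSemidef)
    (v : Fin d → ℝ) : norm2 (hA.sqrt *ᵥ v) = √(v ⬝ᵥ (A *ᵥ v)) := by
  rw [norm2, dotProduct_mulVec, ← mulVec_transpose, hA.transpose_sqrt, mulVec_mulVec,
    hA.sqrt_mul_sqrt, dotProduct_comm]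

end PosSemidef

end Matrix

/-- if `H̃` is an `ε`-spectral approximation of `H`, then the approximate
Newton direction `p̃ = H̃⁻¹g` is close to `p* = H⁻¹g` in the `H`-weighted norm
`‖H^{1/2}·‖₂`. -/
theorem approximate_newton_direction_weighted_bound {d : ℕ}
    (H Htil : Matrix (Fin d) (Fin d) ℝ) (hH : H.PosDef) (hHtil : Htil.PosDef)
    (ε : ℝ) (hε : 0 < ε ∧ ε < 1)
    (happrox : (Htil - (1 - ε) • H).PosSemidef ∧ ((1 + ε) • H - Htil).PosSemidef)
    (g : Fin d → ℝ) :
    norm2 (hH.posSemidef.sqrt *ᵥ (Htil⁻¹ *ᵥ g - H⁻¹ *ᵥ g)) ≤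
      (ε / (1 - ε)) * norm2 (hH.posSemidef.sqrt *ᵥ (H⁻¹ *ᵥ g)) := by
  obtain ⟨hε0, hε1⟩ := hε
  set p := H⁻¹ *ᵥ g
  set Δ := Htil⁻¹ *ᵥ g - p
  have hΔ : Htil *ᵥ Δ = (H - Htil) *ᵥ p :=
    mulVec_inv_mulVec_sub_inv_mulVec hH.isUnit hHtil.isUnit g
  have hlower : (1 - ε) * (Δ ⬝ᵥ (H *ᵥ Δ)) ≤ Δ ⬝ᵥ ((H - Htil) *ᵥ p) := by
    have := happrox.1.dotProduct_mulVec_nonneg Δ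
    rw [star_trivial, sub_mulVec, dotProduct_sub, hΔ, smul_mulVec, dotProduct_smul,
      smul_eq_mul] at this
    linarith
  have hupper : Δ ⬝ᵥ ((H - Htil) *ᵥ p) ≤ ε * √(Δ ⬝ᵥ (H *ᵥ Δ)) * √(p ⬝ᵥ (H *ᵥ p)) := by
    refine dotProduct_mulVec_le_of_neg_smul_le_of_le_smul hε0.le ?_ ?_ Δ p <;> rw [le_iff]
    · rw [show H - Htil - -(ε • H) = (1 + ε) • H - Htil by rw [add_smul, one_smul]; abel]
      exact happrox.2
    · rw [show ε • H - (H - Htil) = Htil - (1 - ε) • H by rw [sub_smul, one_smul]; abel]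
      exact happrox.1
  rw [hH.posSemidef.norm2_sqrt_mulVec, hH.posSemidef.norm2_sqrt_mulVec, div_mul_eq_mul_div,
    le_div_iff₀ (by linarith)]
  have hsqrt_sq := Real.mul_self_sqrt (by simpa using hH.posSemidef.dotProduct_mulVec_nonneg Δ)
  rcases (Real.sqrt_nonneg (Δ ⬝ᵥ (H *ᵥ Δ))).eq_or_lt with hzero | hpos
  · rw [← hzero, zero_mul]
    positivity
  · refine le_of_mul_le_mul_right ?_ hpos
    nlinarith
end
end

section
/- Let F : ℝ^d → ℝ be twice continuously differentiable with a minimizer w*, and suppose its Hessian ∇²F is L-Lipschitz in spectral norm. Fix w_t, let H_t = ∇²F(w_t) be symmetric positive definite, let g_t = ∇F(w_t), and define φ_t(p) = pᵀH_t p − 2pᵀg_t. Let α ∈ (0, 1) and suppose p̃_t satisfies φ_t(p̃_t) ≤ (1 − α²)·min_p φ_t(p). Set w_{t+1} = w_t − p̃_t and Δ_t = w_t − w*, Δ_{t+1} = w_{t+1} − w*. Then Δ_{t+1}ᵀ H_t Δ_{t+1} ≤ L·‖Δ_t‖₂²·‖Δ_{t+1}‖₂ + (α²/(1−α²))·Δ_tᵀ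 H_t Δ_t. -/
open Matrix
open scoped RealInnerProductSpace

noncomputable section

/-!
Write `Δ = w_t - w*`, `Δ' = Δ - p̃` and `H = H_t`. Expanding the quadratic form gives the exact
identity `Δ'ᵀHΔ' = φ(p̃) - φ(Δ) + 2⟪Δ', HΔ - g_t⟫`. Comparing `p̃` with the rescaled competitor
`Δ / (1 - α²)` bounds `φ(p̃) - φ(Δ)` by `α²/(1 - α²) · ΔᵀHΔ`. Since `∇F(w*) = 0`, the remaining
term is the error of a first-order Taylor expansion of `∇F` around `w_t`, which the Lipschitz
Hessian bounds by `L/2 · ‖Δ‖²`; Cauchy–Schwarz finishes.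
-/

open Set

theorem IsLocalMin.gradient_eq_zero {E : Type*} [NormedAddCommGroup E] [InnerProductSpace ℝ E]
    [CompleteSpace E] {f : E → ℝ} {a : E} (h : IsLocalMin f a) : gradient f a = 0 := by
  simp [gradient, h.fderiv_eq_zero]

theorem ContDiff.differentiable_gradient {E : Type*} [NormedAddCommGroup E]
    [InnerProductSpace ℝ E] [CompleteSpace E] {f : E → ℝ} (hf : ContDiff ℝ 2 f) :
    Differentiable ℝ (gradient f) :=
  (InnerProductSpace.toDual ℝ E).symm.differentiable.comp
    ((hf.fderiv_right le_rfl).differentiable one_ne_zero)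

/-- Along `s ↦ x + s • (y - x)` the Taylor remainder has derivative of norm at most
`L ‖y - x‖² (1 - s)`, which integrates to `L/2 ‖y - x‖²`. -/
theorem norm_sub_sub_fderiv_apply_le {E F : Type*} [NormedAddCommGroup E] [NormedSpace ℝ E]
    [NormedAddCommGroup F] [NormedSpace ℝ F] {f : E → F} (hf : Differentiable ℝ f) {L : ℝ}
    (hL : ∀ x y v, ‖fderiv ℝ f x v - fderiv ℝ f y v‖ ≤ L * ‖x - y‖ * ‖v‖) (x y : E) :
    ‖f y - f x - fderiv ℝ f y (y - x)‖ ≤ L / 2 * ‖y - x‖ ^ 2 := by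
  set v := y - x
  let γ : ℝ → E := fun s => x + s • v
  have hγ : ∀ s, HasDerivAt γ v s := fun s =>
    (((hasDerivAt_id s).smul_const v).const_add x).congr_deriv (one_smul ℝ v)
  have hγ_sub : ∀ s, γ s - y = -((1 - s) • v) := fun s => by
    simp only [γ, v, sub_smul, one_smul, smul_sub]; abel
  let r : ℝ → F := fun s => f (γ s) - f x - s • fderiv ℝ f y v
  have hr : ∀ s, HasDerivAt r (fderiv ℝ f (γ s) v - fderiv ℝ f y v) s := fun s => by
    have := (((hf (γ s)).hasFDerivAt.comp_hasDerivAt s (hγ s)).sub_const (f x)).sub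
      ((hasDerivAt_id s).smul_const (fderiv ℝ f y v))
    exact this.congr_deriv (by rw [one_smul])
  have hr_bound : ∀ s ∈ Ico (0 : ℝ) 1,
      ‖fderiv ℝ f (γ s) v - fderiv ℝ f y v‖ ≤ L * ‖v‖ ^ 2 * (1 - s) := fun s hs => by
    calc _ ≤ L * ‖γ s - y‖ * ‖v‖ := hL _ _ _
      _ = L * ‖v‖ ^ 2 * (1 - s) := by
        rw [hγ_sub, norm_neg, norm_smul, Real.norm_of_nonneg (by linarith [hs.2])]; ring
  have hB : ∀ s, HasDerivAt (fun s => L * ‖v‖ ^ 2 * (s - s ^ 2 / 2)) (L * ‖v‖ ^ 2 * (1 - s)) s :=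
    fun s => (((hasDerivAt_id' s).sub ((hasDerivAt_pow 2 s).div_const 2)).const_mul
      (L * ‖v‖ ^ 2)).congr_deriv (by push_cast; ring)
  have := image_norm_le_of_norm_deriv_right_le_deriv_boundary
    (fun s _ => (hr s).continuousAt.continuousWithinAt) (fun s _ => (hr s).hasDerivWithinAt)
    (by simp [r, γ]) hB hr_bound (right_mem_Icc.2 zero_le_one)
  simpa [r, γ, v] using this.trans_eq (by ring)

section NewtonObjective

variable {E : Type*} [NormedAddCommGroup E] [InnerProductSpace ℝ E]

/-- The paper's `φ_t`, with `T = H_t` and `g = g_t`. -/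
def newtonObjective (T : E →ₗ[ℝ] E) (g p : E) : ℝ := ⟪p, T p⟫ - 2 * ⟪p, g⟫

theorem inner_sub_apply_sub_eq_newtonObjective {T : E →ₗ[ℝ] E} (hT : T.IsSymmetric)
    (g Δ p : E) :
    ⟪Δ - p, T (Δ - p)⟫ =
      newtonObjective T g p - newtonObjective T g Δ + 2 * ⟪Δ - p, T Δ - g⟫ := by
  have hsymm : ⟪Δ, T p⟫ = ⟪p, T Δ⟫ := by rw [← hT, real_inner_comm]
  simp only [newtonObjective, map_sub, inner_sub_left, inner_sub_right, hsymm]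
  ring

theorem newtonObjective_sub_le_of_forall_le_mul {T : E →ₗ[ℝ] E} {g p : E} {c : ℝ} (hc : c ≠ 0)
    (hp : ∀ q, newtonObjective T g p ≤ c * newtonObjective T g q) (v : E) :
    newtonObjective T g p - newtonObjective T g v ≤ (c⁻¹ - 1) * ⟪v, T v⟫ := by
  have hcompetitor : c * newtonObjective T g (c⁻¹ • v) = c⁻¹ * ⟪v, T v⟫ - 2 * ⟪v, g⟫ := by
    simp only [newtonObjective, map_smul, real_inner_smul_left, real_inner_smul_right]
    field_simp
  have := hp (c⁻¹ • v)
  rw [hcompetitor] at this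
  unfold newtonObjective at this ⊢
  linarith

end NewtonObjective

/-- the Approximate Newton Step lemma. If a direction `p̃` nearly minimizes the
quadratic auxiliary function `φ_t(p) = pᵀH_t p − 2pᵀg_t` (within factor `1 − α²` of the
minimum), then the step `w_{t+1} = w_t − p̃` satisfies a linear-quadratic error recursion. -/
theorem approximate_newton_step {d : ℕ}
    (F : EuclideanSpace ℝ (Fin d) → ℝ) (hF : ContDiff ℝ 2 F)
    (wstar : EuclideanSpace ℝ (Fin d)) (hmin : ∀ w, F wstar ≤ F w)
    (L : ℝ)
    (Hess : EuclideanSpace ℝ (Fin d) → Matrix (Fin d) (Fin d) ℝ)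
    (hHess : ∀ w y, fderiv ℝ (gradient F) w y = Matrix.toEuclideanLin (Hess w) y)
    (hLip : ∀ w w' x, ‖Matrix.toEuclideanLin (Hess w - Hess w') x‖ ≤ L * ‖w - w'‖ * ‖x‖)
    (wt : EuclideanSpace ℝ (Fin d)) (hHt : (Hess wt).PosDef)
    (α : ℝ) (hα : 0 < α ∧ α < 1)
    (ptil : EuclideanSpace ℝ (Fin d))
    (hptil : ∀ p : EuclideanSpace ℝ (Fin d),
      ⟪ptil, Matrix.toEuclideanLin (Hess wt) ptil⟫ - 2 * ⟪ptil, gradient F wt⟫ ≤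
        (1 - α ^ 2) * (⟪p, Matrix.toEuclideanLin (Hess wt) p⟫ - 2 * ⟪p, gradient F wt⟫))
    (wnext : EuclideanSpace ℝ (Fin d)) (hupdate : wnext = wt - ptil) :
    ⟪wnext - wstar, Matrix.toEuclideanLin (Hess wt) (wnext - wstar)⟫ ≤
      L * ‖wt - wstar‖ ^ 2 * ‖wnext - wstar‖
        + (α ^ 2 / (1 - α ^ 2)) * ⟪wt - wstar, Matrix.toEuclideanLin (Hess wt) (wt - wstar)⟫ := by
  set T := Matrix.toEuclideanLin (Hess wt)
  have hT : T.IsSymmetric := isSymmetric_toEuclideanLin_iff.mpr hHt.1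
  have hα2 : 1 - α ^ 2 ≠ 0 := by nlinarith
  have hgradLip : ∀ x y v, ‖fderiv ℝ (gradient F) x v - fderiv ℝ (gradient F) y v‖ ≤
      L * ‖x - y‖ * ‖v‖ := fun x y v => by
    simpa only [hHess, map_sub, LinearMap.sub_apply] using hLip x y v
  have htaylor : ‖T (wt - wstar) - gradient F wt‖ ≤ L / 2 * ‖wt - wstar‖ ^ 2 := by
    have := norm_sub_sub_fderiv_apply_le hF.differentiable_gradient hgradLip wstar wt
    rwa [IsLocalMin.gradient_eq_zero (Filter.Eventually.of_forall hmin), sub_zero, hHess,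
      norm_sub_rev] at this
  have hdecrease := newtonObjective_sub_le_of_forall_le_mul hα2 hptil (wt - wstar)
  have hcoeff : (1 - α ^ 2)⁻¹ - 1 = α ^ 2 / (1 - α ^ 2) := by field_simp; ring
  rw [hupdate, sub_right_comm, inner_sub_apply_sub_eq_newtonObjective hT (gradient F wt)]
  have hcross := (real_inner_le_norm (wt - wstar - ptil) _).trans
    (mul_le_mul_of_nonneg_left htaylor (norm_nonneg (wt - wstar - ptil)))
  rw [hcoeff] at hdecrease
  linarith
end
end
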